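/- arXiv:2002.06640 — 3 statements merged into one kernel-verified Lean document; each statement's English description precedes it below -/
import Mathlib

section
/- For every n ≥ 1, the set {x : Fin n → ℝ | ∑_{i=1}^{n} x_i = n(n+1)/2 and ∑_{i∈I} x_i ≥ |I|(|I|+1)/2 for every nonempty proper subset I ⊊ {1,…,n}} (the core of the game ℒ(I) = |I|(|I|+1)/2) is equal to the convex hull in ℝ^n of the finite set of permutation vectors {(σ(1)+1,…,σ(n)+1) | σ a bijection of Fin n} — the classical convex realization of the permutohedron P_n as the convex hull of {σ(1,…,n) | σ ∈ S_n}. -/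
/-!
A permutation vector lies in the core since any `k` distinct numbers among `1, …, n` sum to at
least `1 + ⋯ + k`; the core is convex, so it contains the permutohedron. Conversely, if a core
point `x` were outside the permutohedron, a linear functional `c` would separate them. Sort `c`
increasingly and let `y` be the permutation vector ranked like `c`. The prefix sums of `x - y` in
this order are nonnegative (core inequalities, with equality for `y`) and the total is `0`, so Abel
summation against the increasing weights `c` gives `c x ≤ c y`, a contradiction.
-/

open Finset

theorem Finset.sum_range_card_le_sum_of_monotone {M : Type*} [AddCommMonoid M] [PartialOrder M]
    [IsOrderedAddMonoid M] {f : ℕ → M} (hf : Monotone f) (J : Finset ℕ) :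
    ∑ k ∈ range #J, f k ≤ ∑ j ∈ J, f j := by
  induction J using Finset.induction_on_max with
  | empty => simp
  | insert a s hlt ih =>
    have ha : a ∉ s := fun h => lt_irrefl a (hlt a h)
    have hcard : #s ≤ a := by
      simpa using card_le_card (fun x hx => mem_range.2 (hlt x hx) : s ⊆ range a)
    rw [card_insert_of_notMem ha, sum_range_succ, sum_insert ha, add_comm (f a)]
    exact add_le_add ih (hf hcard)

theorem Fin.sum_mul_le_mul_sum_of_monotone {R : Type*} [CommRing R] [PartialOrder R]
    [IsOrderedRing R] {n : ℕ} {d e : Fin n → R} (hd : Monotone d)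
    (he : ∀ j, 0 ≤ ∑ i ∈ Iic j, e i) {t : R} (ht : ∀ i, d i ≤ t) :
    ∑ i, d i * e i ≤ t * ∑ i, e i := by
  induction n generalizing t with
  | zero => simp
  | succ m ih =>
    have hinit : ∑ i : Fin m, d i.castSucc * e i.castSucc ≤
        d (last m) * ∑ i : Fin m, e i.castSucc :=
      ih (hd.comp Fin.strictMono_castSucc.monotone)
        (fun j => by simpa only [Fin.sum_Iic_castSucc] using he j.castSucc)
        (fun i => hd (le_last _))
    have htotal : 0 ≤ ∑ i, e i := by simpa [← Fin.top_eq_last, Iic_top] using he (last m)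
    rw [Fin.sum_univ_castSucc, Fin.sum_univ_castSucc e] at *
    calc _ ≤ d (last m) * ∑ i : Fin m, e i.castSucc + d (last m) * e (last m) := by gcongr
      _ = d (last m) * (∑ i : Fin m, e i.castSucc + e (last m)) := by ring
      _ ≤ t * (∑ i : Fin m, e i.castSucc + e (last m)) := mul_le_mul_of_nonneg_right (ht _) htotal

section Core

variable {ι : Type*} [Fintype ι]

def core (v : Finset ι → ℝ) : Set (ι → ℝ) :=
  {x | ∑ i, x i = v univ ∧ ∀ I : Finset ι, I.Nonempty → I ≠ univ → v I ≤ ∑ i ∈ I, x i}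

theorem convex_core (v : Finset ι → ℝ) : Convex ℝ (core v) := by
  have hlin (I : Finset ι) : IsLinearMap ℝ fun x : ι → ℝ => ∑ i ∈ I, x i :=
    ⟨fun x y => sum_add_distrib, fun a x => by simp [mul_sum]⟩
  intro x hx y hy a b ha hb hab
  refine ⟨convex_hyperplane (hlin univ) _ hx.1 hy.1 ha hb hab, fun I hI hIu => ?_⟩
  exact convex_halfSpace_ge (hlin I) _ (hx.2 I hI hIu) (hy.2 I hI hIu) ha hb hab

theorem le_sum_of_mem_core {v : Finset ι → ℝ} {x : ι → ℝ} (hx : x ∈ core v) {I : Finset ι}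
    (hI : I.Nonempty) : v I ≤ ∑ i ∈ I, x i := by
  by_cases hIu : I = univ
  · rw [hIu, hx.1]
  · exact hx.2 I hI hIu

end Core

noncomputable section

def triangularGame {ι : Type*} (I : Finset ι) : ℝ := #I * (#I + 1) / 2

def permVector {n : ℕ} (σ : Equiv.Perm (Fin n)) : Fin n → ℝ := fun i => ((σ i : ℕ) : ℝ) + 1

end

theorem triangularGame_eq_of_card_eq {ι κ : Type*} {I : Finset ι} {J : Finset κ} (h : #I = #J) :
    triangularGame I = triangularGame J := by
  rw [triangularGame, triangularGame, h]

theorem sum_range_cast_add_one (m : ℕ) :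
    ∑ k ∈ range m, ((k : ℝ) + 1) = triangularGame (range m) := by
  rw [triangularGame, card_range]
  induction m with
  | zero => simp
  | succ m ih => rw [sum_range_succ, ih]; push_cast; ring

theorem Fin.sum_univ_cast_add_one (n : ℕ) :
    ∑ i : Fin n, (((i : ℕ) : ℝ) + 1) = triangularGame (univ : Finset (Fin n)) := by
  rw [Fin.sum_univ_eq_sum_range (fun k => (k : ℝ) + 1), sum_range_cast_add_one]
  exact triangularGame_eq_of_card_eq (by simp)

theorem Fin.sum_Iic_cast_add_one {n : ℕ} (j : Fin n) :
    ∑ i ∈ Iic j, (((i : ℕ) : ℝ) + 1) = triangularGame (Iic j) := by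
  have hval : ∑ i ∈ Iic j, (((i : ℕ) : ℝ) + 1) =
      ∑ k ∈ (Iic j).map Fin.valEmbedding, ((k : ℝ) + 1) := by
    rw [sum_map]; rfl
  rw [hval, Fin.map_valEmbedding_Iic, ← Nat.range_succ_eq_Iic, sum_range_cast_add_one]
  exact triangularGame_eq_of_card_eq (by simp)

theorem permVector_mem_core {n : ℕ} (σ : Equiv.Perm (Fin n)) :
    permVector σ ∈ core triangularGame := by
  refine ⟨?_, fun I _ _ => ?_⟩
  · simp only [permVector]
    rw [Equiv.sum_comp σ (fun i : Fin n => ((i : ℕ) : ℝ) + 1), Fin.sum_univ_cast_add_one]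
  · have := sum_range_card_le_sum_of_monotone (Nat.mono_cast.add_const (1 : ℝ))
      (I.map (σ.toEmbedding.trans Fin.valEmbedding))
    rwa [sum_range_cast_add_one, triangularGame_eq_of_card_eq (card_range _), sum_map,
      triangularGame_eq_of_card_eq (card_map _)] at this

theorem sum_mul_le_sum_permVector_sort_mul {n : ℕ} {x : Fin n → ℝ}
    (hx : x ∈ core triangularGame) (c : Fin n → ℝ) :
    ∑ i, x i * c i ≤ ∑ i, permVector (Tuple.sort c).symm i * c i := by
  set τ := Tuple.sort c
  have hprefix (j : Fin n) : 0 ≤ ∑ k ∈ Iic j, (x (τ k) - (((k : ℕ) : ℝ) + 1)) := by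
    have hI := le_sum_of_mem_core hx (I := (Iic j).map τ.toEmbedding) ⟨τ j, by simp⟩
    rw [sum_map, triangularGame_eq_of_card_eq (card_map _)] at hI
    rw [sum_sub_distrib, sub_nonneg, Fin.sum_Iic_cast_add_one]
    exact hI
  have htotal : ∑ k, (x (τ k) - (((k : ℕ) : ℝ) + 1)) = 0 := by
    rw [sum_sub_distrib, Equiv.sum_comp τ x, hx.1, Fin.sum_univ_cast_add_one, sub_self]
  -- any upper bound `t` of `c` will do, since it only multiplies the total `0`
  obtain ⟨t, ht⟩ := (Set.finite_range (c ∘ τ)).bddAbove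
  have key := Fin.sum_mul_le_mul_sum_of_monotone (Tuple.monotone_sort c) hprefix
    (fun i => ht (Set.mem_range_self i))
  rw [htotal, mul_zero] at key
  calc ∑ i, x i * c i = ∑ k, x (τ k) * c (τ k) := (Equiv.sum_comp τ _).symm
    _ ≤ ∑ k : Fin n, (((k : ℕ) : ℝ) + 1) * c (τ k) := by
      rw [← sub_nonpos, ← sum_sub_distrib]
      refine (sum_congr rfl fun k _ => ?_).trans_le key
      simp only [Function.comp_apply, τ]
      ring
    _ = ∑ i, permVector τ.symm i * c i := by
      rw [← Equiv.sum_comp τ (fun i => permVector τ.symm i * c i)]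
      simp [permVector]

theorem core_triangularGame_subset_convexHull (n : ℕ) :
    core triangularGame ⊆ convexHull ℝ (Set.range (permVector (n := n))) := by
  intro x hx
  by_contra hxnot
  obtain ⟨f, u, hfu, hux⟩ := geometric_hahn_banach_closed_point (convex_convexHull ℝ _)
    ((Set.finite_range _).isClosed_convexHull (𝕜 := ℝ)) hxnot
  set c : Fin n → ℝ := fun i => f fun j => if i = j then 1 else 0
  have hf (y : Fin n → ℝ) : f y = ∑ i, y i * c i := f.toLinearMap.pi_apply_eq_sum_univ y
  have hsorted := hfu _ (subset_convexHull ℝ _ (Set.mem_range_self (Tuple.sort c).symm))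
  have := sum_mul_le_sum_permVector_sort_mul hx c
  rw [hf] at hsorted hux
  linarith

theorem stmt_6_general (n : ℕ) :
    {x : Fin n → ℝ |
        (∑ i : Fin n, x i) = n * (n + 1) / 2 ∧
        ∀ I : Finset (Fin n), I.Nonempty → I ≠ Finset.univ →
          (I.card * (I.card + 1) : ℝ) / 2 ≤ ∑ i ∈ I, x i}
      = convexHull ℝ
          {x : Fin n → ℝ | ∃ σ : Equiv.Perm (Fin n),
            x = fun i => ((σ i : ℕ) + 1 : ℝ)} := by
  have hcore : {x : Fin n → ℝ | (∑ i : Fin n, x i) = n * (n + 1) / 2 ∧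
      ∀ I : Finset (Fin n), I.Nonempty → I ≠ Finset.univ →
        (I.card * (I.card + 1) : ℝ) / 2 ≤ ∑ i ∈ I, x i} = core triangularGame := by
    simp [core, triangularGame]
  have hperm : {x : Fin n → ℝ | ∃ σ : Equiv.Perm (Fin n), x = fun i => ((σ i : ℕ) + 1 : ℝ)} =
      Set.range permVector := by
    ext x
    constructor <;> rintro ⟨σ, rfl⟩ <;> exact ⟨σ, rfl⟩
  rw [hcore, hperm]
  exact (core_triangularGame_subset_convexHull n).antisymm
    (convexHull_min (Set.range_subset_iff.2 permVector_mem_core) (convex_core _))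

/-- **Example 1.2** (Batanin–Markl–Obradović): the core of the strictly convex game
`ℒ(I) = |I|(|I|+1)/2` on `n` players is the classical convex realization of the
permutohedron `Pₙ`: it equals the convex hull of the permutation vectors
`{(σ(1)+1, …, σ(n)+1) | σ ∈ Sₙ}` in `ℝⁿ`. -/
theorem stmt_6 (n : ℕ) (hn : 1 ≤ n) :
    {x : Fin n → ℝ |
        (∑ i : Fin n, x i) = n * (n + 1) / 2 ∧
        ∀ I : Finset (Fin n), I.Nonempty → I ≠ Finset.univ →
          (I.card * (I.card + 1) : ℝ) / 2 ≤ ∑ i ∈ I, x i}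
      = convexHull ℝ
          {x : Fin n → ℝ | ∃ σ : Equiv.Perm (Fin n),
            x = fun i => ((σ i : ℕ) + 1 : ℝ)} :=
  stmt_6_general n
end

section
/- Let n ≥ 1 and let Π be a function from subsets of {1,…,n} to ℝ with Π(∅) = 0 which is convex (supermodular), i.e. Π(X∪Y) + Π(X∩Y) ≥ Π(X) + Π(Y) for all subsets X, Y. Then the core of Π is nonempty: there exists a vector x : Fin n → ℝ such that ∑_{i=1}^{n} x_i = Π({1,…,n}) and ∑_{i∈I} x_i ≥ Π(I) for every subset I of {1,…,n}. -/
/-- **Shapley's theorem** (nonemptiness of the core of a convex game): if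
`P : Finset (Fin n) → ℝ` is a cooperative game with `P ∅ = 0` which is convex
(supermodular), i.e. `P(X∪Y) + P(X∩Y) ≥ P(X) + P(Y)` for all coalitions, then
its core is nonempty: there is `x : Fin n → ℝ` with `∑ i, x i = P univ` and
`∑ i ∈ I, x i ≥ P I` for every coalition `I`. -/
theorem stmt_7 (n : ℕ) (hn : 1 ≤ n) (P : Finset (Fin n) → ℝ)
    (h0 : P ∅ = 0)
    (hconv : ∀ X Y : Finset (Fin n), P X + P Y ≤ P (X ∪ Y) + P (X ∩ Y)) :
    ∃ x : Fin n → ℝ,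
      (∑ i : Fin n, x i) = P Finset.univ ∧
      ∀ I : Finset (Fin n), P I ≤ ∑ i ∈ I, x i := by
  classical
  set S : ℕ → Finset (Fin n) := fun k => Finset.univ.filter (fun j => (j : ℕ) < k) with hS
  have hS0 : S 0 = ∅ := by
    ext j; simp [hS]
  have hSn : S n = Finset.univ := by
    ext j; simp [hS, j.isLt]
  refine ⟨fun i => P (S ((i : ℕ) + 1)) - P (S (i : ℕ)), ?_, ?_⟩
  · rw [Fin.sum_univ_eq_sum_range (fun k => P (S (k + 1)) - P (S k)),
      Finset.sum_range_sub (fun k => P (S k)), hS0, hSn, h0, sub_zero]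
  · intro I
    induction I using Finset.strongInduction with
    | _ I ih =>
      rcases I.eq_empty_or_nonempty with rfl | hI
      · simp [h0]
      · set i := I.max' hI with hi
        have hiI : i ∈ I := I.max'_mem hI
        have hle : ∀ j ∈ I, j ≤ i := fun j hj => I.le_max' j hj
        have hunion : I ∪ S (i : ℕ) = S ((i : ℕ) + 1) := by
          ext j
          simp only [Finset.mem_union, hS, Finset.mem_filter, Finset.mem_univ, true_and,
            Nat.lt_succ_iff]
          constructor
          · rintro (hj | hj)
            · exact_mod_cast hle j hj
            · exact hj.le
          · intro hj
            rcases lt_or_eq_of_le hj with h | h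
            · exact Or.inr h
            · exact Or.inl (by rwa [show j = i from Fin.ext h])
        have hinter : I ∩ S (i : ℕ) = I.erase i := by
          ext j
          simp only [Finset.mem_inter, hS, Finset.mem_filter, Finset.mem_univ, true_and,
            Finset.mem_erase]
          constructor
          · rintro ⟨hj, hlt⟩
            exact ⟨fun h => by simp [h] at hlt, hj⟩
          · rintro ⟨hne, hj⟩
            refine ⟨hj, lt_of_le_of_ne (by exact_mod_cast hle j hj) ?_⟩
            exact fun h => hne (Fin.ext h)
        have key := hconv I (S (i : ℕ))
        rw [hunion, hinter] at key
        have h1 : P I ≤ (P (S ((i : ℕ) + 1)) - P (S (i : ℕ))) + P (I.erase i) := by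
          linarith
        have h2 : P (I.erase i) ≤ ∑ j ∈ I.erase i, (P (S ((j : ℕ) + 1)) - P (S (j : ℕ))) :=
          ih _ (Finset.erase_ssubset hiI)
        calc P I ≤ (P (S ((i : ℕ) + 1)) - P (S (i : ℕ))) + P (I.erase i) := h1
          _ ≤ (P (S ((i : ℕ) + 1)) - P (S (i : ℕ)))
              + ∑ j ∈ I.erase i, (P (S ((j : ℕ) + 1)) - P (S (j : ℕ))) := by linarith
          _ = ∑ j ∈ I, (P (S ((j : ℕ) + 1)) - P (S (j : ℕ))) := Finset.add_sum_erase _ (fun j : Fin n => P (S ((j : ℕ) + 1)) - P (S (j : ℕ))) hiI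
end

section
/- Let G be a simple graph on a vertex type V, and let E be a nonempty set of edges of G. Then the subgraph of G spanned by E (the subgraph whose edge set is E and whose vertex set consists of the endpoints of the edges in E) is connected if and only if E is a connected set of vertices in the line graph of G, i.e. the subgraph of the line graph of G induced on E is connected. (This is the simple-graph case of the correspondence between connected subgraphs of a graph Γ with at least one internal edge and connected subsets of the hypergraph 𝐇_Γ whose vertices are the internal edges of Γ, two being adjacent whenever they share a vertex of Γ.) -/
open SimpleGraph

section
variable {V : Type*} (G : SimpleGraph V) (E : Set (Sym2 V))

private lemma aux_same_edge {u v : {v : V | ∃ e ∈ E, v ∈ e}} {e : Sym2 V}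
    (he : e ∈ E) (hu : (u : V) ∈ e) (hv : (v : V) ∈ e) :
    ((SimpleGraph.fromEdgeSet E).induce {v : V | ∃ e ∈ E, v ∈ e}).Reachable u v := by
  by_cases h : (u : V) = (v : V)
  · exact (Subtype.ext h) ▸ Reachable.refl u
  · refine SimpleGraph.Adj.reachable ?_
    simp only [comap_adj, Function.Embedding.coe_subtype, fromEdgeSet_adj]
    refine ⟨?_, h⟩
    rw [← (Sym2.mem_and_mem_iff h).mp ⟨hu, hv⟩]
    exact he

private lemma aux_fwd (hE : E ⊆ G.edgeSet) {x y : {v : V | ∃ e ∈ E, v ∈ e}}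
    (w : ((SimpleGraph.fromEdgeSet E).induce {v : V | ∃ e ∈ E, v ∈ e}).Walk x y) :
    ∀ (e f : {e : G.edgeSet | (e : Sym2 V) ∈ E}), (x : V) ∈ (e : Sym2 V) →
      (y : V) ∈ (f : Sym2 V) →
      (G.lineGraph.induce {e : G.edgeSet | (e : Sym2 V) ∈ E}).Reachable e f := by
  induction w with
  | nil =>
    intro e f he hf
    by_cases h : e = f
    · subst h; exact Reachable.refl _
    · refine SimpleGraph.Adj.reachable ?_
      simp only [comap_adj, Function.Embedding.coe_subtype, lineGraph_adj_iff_exists]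
      exact ⟨fun hh => h (Subtype.ext (Subtype.ext (congrArg Subtype.val hh))), _, he, hf⟩
  | @cons u v y hadj w ih =>
    intro e f he hf
    simp only [comap_adj, Function.Embedding.coe_subtype, fromEdgeSet_adj] at hadj
    have hgE : s((u:V), (v:V)) ∈ E := hadj.1
    have hg : s((u:V), (v:V)) ∈ G.edgeSet := hE hgE
    set g : {e : G.edgeSet | (e : Sym2 V) ∈ E} := ⟨⟨s((u:V),(v:V)), hg⟩, hgE⟩ with hgdef
    have h1 : (G.lineGraph.induce {e : G.edgeSet | (e : Sym2 V) ∈ E}).Reachable e g := by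
      by_cases h : e = g
      · subst h; exact Reachable.refl _
      · refine SimpleGraph.Adj.reachable ?_
        simp only [comap_adj, Function.Embedding.coe_subtype, lineGraph_adj_iff_exists]
        exact ⟨fun hh => h (Subtype.ext (Subtype.ext (congrArg Subtype.val hh))),
          (u:V), he, by simp [hgdef]⟩
    exact h1.trans (ih g f (by simp [hgdef]) hf)

private lemma aux_bwd (hE : E ⊆ G.edgeSet) {e f : {e : G.edgeSet | (e : Sym2 V) ∈ E}}
    (w : (G.lineGraph.induce {e : G.edgeSet | (e : Sym2 V) ∈ E}).Walk e f) :
    ∀ (u v : {v : V | ∃ e ∈ E, v ∈ e}), (u : V) ∈ (e : Sym2 V) →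
      (v : V) ∈ (f : Sym2 V) →
      ((SimpleGraph.fromEdgeSet E).induce {v : V | ∃ e ∈ E, v ∈ e}).Reachable u v := by
  induction w with
  | @nil a => intro u v hu hv; exact aux_same_edge E a.2 hu hv
  | @cons e g f hadj w ih =>
    intro u v hu hv
    simp only [comap_adj, Function.Embedding.coe_subtype, lineGraph_adj_iff_exists] at hadj
    obtain ⟨-, z, hze, hzg⟩ := hadj
    have hzA : z ∈ {v : V | ∃ e ∈ E, v ∈ e} := ⟨e, e.2, hze⟩
    exact (aux_same_edge E e.2 hu hze (v := ⟨z, hzA⟩)).trans (ih ⟨z, hzA⟩ v hzg hv)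

end

/-- **Lemma 2.4** (simple-graph case, Batanin–Markl–Obradović): for a simple graph `G`
and a nonempty set `E` of edges of `G`, the subgraph of `G` spanned by `E` (the graph
with edge set `E`, restricted to the endpoints of the edges in `E`) is connected if
and only if `E` is a connected set of vertices in the line graph of `G`, i.e. the
subgraph of the line graph induced on `E` is connected. -/
theorem stmt_10 {V : Type*} (G : SimpleGraph V) (E : Set (Sym2 V))
    (hE : E ⊆ G.edgeSet) (hne : E.Nonempty) :
    ((SimpleGraph.fromEdgeSet E).induce {v : V | ∃ e ∈ E, v ∈ e}).Connected ↔
    (G.lineGraph.induce {e : G.edgeSet | (e : Sym2 V) ∈ E}).Connected := by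
  obtain ⟨e₀, he₀⟩ := hne
  have hv₀ : ∃ v, v ∈ e₀ := by
    induction e₀ using Sym2.inductionOn with
    | hf x y => exact ⟨x, Sym2.mem_mk_left x y⟩
  obtain ⟨v₀, hv₀⟩ := hv₀
  constructor
  · intro h
    haveI : Nonempty {e : G.edgeSet | (e : Sym2 V) ∈ E} := ⟨⟨⟨e₀, hE he₀⟩, he₀⟩⟩
    refine ⟨fun e f => ?_⟩
    -- pick endpoints of e, f
    obtain ⟨u, hu⟩ : ∃ u, u ∈ (e : Sym2 V) := ⟨(e : Sym2 V).out.1, Sym2.out_fst_mem _⟩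
    obtain ⟨v, hv⟩ : ∃ v, v ∈ (f : Sym2 V) := ⟨(f : Sym2 V).out.1, Sym2.out_fst_mem _⟩
    have huA : u ∈ {v : V | ∃ e ∈ E, v ∈ e} := ⟨e, e.2, hu⟩
    have hvA : v ∈ {v : V | ∃ e ∈ E, v ∈ e} := ⟨f, f.2, hv⟩
    obtain ⟨w⟩ := h.preconnected ⟨u, huA⟩ ⟨v, hvA⟩
    exact aux_fwd G E hE w e f hu hv
  · intro h
    haveI : Nonempty {v : V | ∃ e ∈ E, v ∈ e} := ⟨⟨v₀, e₀, he₀, hv₀⟩⟩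
    refine ⟨fun u v => ?_⟩
    obtain ⟨e, heE, hue⟩ := u.2
    obtain ⟨f, hfE, hvf⟩ := v.2
    obtain ⟨w⟩ := h.preconnected ⟨⟨e, hE heE⟩, heE⟩ ⟨⟨f, hE hfE⟩, hfE⟩
    exact aux_bwd G E hE w u v hue hvf
end
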